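/- (Existence and non-uniqueness of background transonic shock solutions on the sphere.) Let θ₀ ∈ (0, π/2), θ₁ ∈ (π/2, π), and u₀ ∈ (c_*, u_max) satisfy F(u₀)·sin θ₀ < F(c_*)·sin θ₁. Then for every shock position θ_b ∈ [θ₀, θ₁] there exist continuous functions u⁻ : [θ₀, θ_b] → (c_*, u_max) and u⁺ : [θ_b, θ₁] → (0, c_*) such that u⁻(θ₀) = u₀, F(u⁻(θ))·sin θ = F(u₀)·sin θ₀ for all θ ∈ [θ₀, θ_b], and F(u⁺(θ))·sin θ = F(u₀)·sin θ₀ for all θ ∈ [θ_b, θ₁]. In particular the Rankine–Hugoniot condition ρ(u⁻(θ_b))·u⁻(θ_b) = ρ(u⁺(θ_b))·u⁺(θ_b) and the entropy condition p(u⁻(θ_b)) < p(u⁺(θ_b)) hold at the shock. -/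

import Mathlib

/-!
On `[0, u_max]` the mass flux `F` vanishes at both ends, increases strictly on `[0, c_*]` and
decreases strictly on `[c_*, u_max]`: its derivative has the sign of `c₀² − (γ+1)u²/2`. Since
`sin` is concave on `[0, π]` it stays above `min (sin θ₀) (sin θ₁)` on `[θ₀, θ₁]`, so the
hypothesis on `u₀` puts the required flux `F(u₀) sin θ₀ / sin θ` strictly between `0` and
`F(c_*)` for every `θ ∈ [θ₀, θ₁]`. It therefore has exactly one preimage on each monotone
branch, and the inverse branches (continuous, being inverses of continuous injections on compact
intervals) composed with `θ ↦ F(u₀) sin θ₀ / sin θ` give `u⁻` and `u⁺` for any shock position.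
The Rankine–Hugoniot condition holds because both carry the same flux, the entropy condition
because the density decreases with the speed and `u⁺ < c_* < u⁻`.
-/

open Real Set Filter Topology

/-- Maximal speed `u_max = √(2c₀²/(γ−1))`. -/
noncomputable def uMax (γ c₀ : ℝ) : ℝ := Real.sqrt (2 * c₀ ^ 2 / (γ - 1))

/-- Critical (sonic) speed `c_* = √(2c₀²/(γ+1))`. -/
noncomputable def cStar (γ c₀ : ℝ) : ℝ := Real.sqrt (2 * c₀ ^ 2 / (γ + 1))

/-- Local sonic speed `c(u) = √(c₀² − ((γ−1)/2)u²)`. -/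
noncomputable def sonic (γ c₀ u : ℝ) : ℝ := Real.sqrt (c₀ ^ 2 - (γ - 1) / 2 * u ^ 2)

/-- Density `ρ(u) = ((c₀² − ((γ−1)/2)u²)/γ)^{1/(γ−1)}`. -/
noncomputable def dens (γ c₀ u : ℝ) : ℝ :=
  ((c₀ ^ 2 - (γ - 1) / 2 * u ^ 2) / γ) ^ ((1 : ℝ) / (γ - 1))

/-- Mass flux `F(u) = ρ(u)·u`. -/
noncomputable def flux (γ c₀ u : ℝ) : ℝ := dens γ c₀ u * u

/-- Pressure `p(u) = ρ(u)^γ`. -/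
noncomputable def pres (γ c₀ u : ℝ) : ℝ := dens γ c₀ u ^ γ

open Function

theorem IsCompact.continuousOn_invFunOn {X Y : Type*} [TopologicalSpace X] [Nonempty X]
    [TopologicalSpace Y] [T2Space Y] {f : X → Y} {s : Set X} (hs : IsCompact s)
    (hf : ContinuousOn f s) (hinj : InjOn f s) : ContinuousOn (invFunOn f s) (f '' s) := by
  rw [continuousOn_iff_isClosed]
  intro t ht
  refine ⟨f '' (s ∩ t), ((hs.inter_right ht).image_of_continuousOn
    (hf.mono inter_subset_left)).isClosed, ?_⟩
  ext y
  constructor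
  · rintro ⟨hyt, x, hx, rfl⟩
    rw [mem_preimage, hinj.leftInvOn_invFunOn hx] at hyt
    exact ⟨⟨x, ⟨hx, hyt⟩, rfl⟩, x, hx, rfl⟩
  · rintro ⟨⟨x, ⟨hx, hxt⟩, rfl⟩, hy⟩
    exact ⟨by rwa [mem_preimage, hinj.leftInvOn_invFunOn hx], hy⟩

theorem invFunOn_Icc_mem_Ioo {f : ℝ → ℝ} {a b y : ℝ} (hab : a ≤ b)
    (hf : ContinuousOn f (Icc a b)) (hy : y ∈ uIoo (f a) (f b)) :
    invFunOn f (Icc a b) y ∈ Ioo a b ∧ f (invFunOn f (Icc a b) y) = y := by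
  have hy' : y ∈ f '' Icc a b := by
    rw [← uIcc_of_le hab] at hf ⊢
    exact intermediate_value_uIcc hf (uIoo_subset_uIcc_self hy)
  have hfx := invFunOn_eq hy'
  obtain ⟨hax, hxb⟩ := invFunOn_mem hy'
  refine ⟨⟨hax.lt_of_ne ?_, hxb.lt_of_ne ?_⟩, hfx⟩ <;> rintro hx
  · exact left_notMem_uIoo (a := y) (by rwa [hx, hfx] at hy)
  · exact right_notMem_uIoo (b := y) (by rwa [← hx, hfx] at hy)

section GasDynamics

variable {γ c₀ u : ℝ}

theorem sq_uMax (hγ : 1 < γ) : uMax γ c₀ ^ 2 = 2 * c₀ ^ 2 / (γ - 1) := by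
  have : 0 < γ - 1 := by linarith
  rw [uMax, sq_sqrt (by positivity)]

theorem lt_uMax_iff (hγ : 1 < γ) (hu : 0 ≤ u) :
    u < uMax γ c₀ ↔ 0 < c₀ ^ 2 - (γ - 1) / 2 * u ^ 2 := by
  rw [uMax, lt_sqrt hu, lt_div_iff₀ (by linarith)]
  constructor <;> intro h <;> linarith

theorem le_uMax_iff (hγ : 1 < γ) (hu : 0 ≤ u) :
    u ≤ uMax γ c₀ ↔ 0 ≤ c₀ ^ 2 - (γ - 1) / 2 * u ^ 2 := by
  have : 0 < γ - 1 := by linarith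
  rw [uMax, le_sqrt hu (by positivity), le_div_iff₀ this]
  constructor <;> intro h <;> linarith

theorem lt_cStar_iff (hγ : 1 < γ) (hu : 0 ≤ u) :
    u < cStar γ c₀ ↔ 0 < c₀ ^ 2 - (γ + 1) / 2 * u ^ 2 := by
  rw [cStar, lt_sqrt hu, lt_div_iff₀ (by linarith)]
  constructor <;> intro h <;> linarith

theorem le_cStar_iff (hγ : 1 < γ) (hu : 0 ≤ u) :
    u ≤ cStar γ c₀ ↔ 0 ≤ c₀ ^ 2 - (γ + 1) / 2 * u ^ 2 := by
  have : 0 < γ + 1 := by linarith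
  rw [cStar, le_sqrt hu (by positivity), le_div_iff₀ this]
  constructor <;> intro h <;> linarith

theorem cStar_pos (hγ : 1 < γ) (hc₀ : 0 < c₀) : 0 < cStar γ c₀ := by
  have : 0 < γ + 1 := by linarith
  exact sqrt_pos.2 (by positivity)

theorem cStar_lt_uMax (hγ : 1 < γ) (hc₀ : 0 < c₀) : cStar γ c₀ < uMax γ c₀ :=
  sqrt_lt_sqrt (by positivity) (div_lt_div_of_pos_left (by positivity) (by linarith) (by linarith))

theorem flux_zero : flux γ c₀ 0 = 0 := by
  simp [flux]

theorem flux_uMax (hγ : 1 < γ) : flux γ c₀ (uMax γ c₀) = 0 := by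
  have hbase : c₀ ^ 2 - (γ - 1) / 2 * uMax γ c₀ ^ 2 = 0 := by
    rw [sq_uMax hγ]
    field_simp [(by linarith : γ - 1 ≠ 0)]
    ring
  rw [flux, dens, hbase, zero_div, zero_rpow (one_div_ne_zero (by linarith)), zero_mul]

theorem continuous_flux (hγ : 1 < γ) : Continuous (flux γ c₀) := by
  have : 0 ≤ 1 / (γ - 1) := one_div_nonneg.2 (by linarith)
  exact ((by fun_prop : Continuous fun u : ℝ ↦ (c₀ ^ 2 - (γ - 1) / 2 * u ^ 2) / γ).rpow_const
    fun _ ↦ Or.inr this).mul continuous_id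

theorem flux_pos (hγ : 1 < γ) (hu : u ∈ Ioo 0 (uMax γ c₀)) : 0 < flux γ c₀ u :=
  mul_pos (rpow_pos_of_pos (div_pos ((lt_uMax_iff hγ hu.1.le).1 hu.2) (by linarith)) _) hu.1

theorem hasDerivAt_flux (hγ : 1 < γ) (hu : c₀ ^ 2 - (γ - 1) / 2 * u ^ 2 ≠ 0) :
    HasDerivAt (flux γ c₀)
      (((c₀ ^ 2 - (γ - 1) / 2 * u ^ 2) / γ) ^ (1 / (γ - 1) - 1) *
        ((c₀ ^ 2 - (γ + 1) / 2 * u ^ 2) / γ)) u := by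
  have hγ0 : γ ≠ 0 := by linarith
  have hγ1 : γ - 1 ≠ 0 := by linarith
  set A : ℝ → ℝ := fun u ↦ (c₀ ^ 2 - (γ - 1) / 2 * u ^ 2) / γ
  have hA : A u ≠ 0 := div_ne_zero hu hγ0
  have hA' : HasDerivAt A (-((γ - 1) * u) / γ) u :=
    ((((hasDerivAt_pow 2 u).const_mul ((γ - 1) / 2)).const_sub (c₀ ^ 2)).div_const γ).congr_deriv
      (by ring)
  refine ((hA'.rpow_const (p := 1 / (γ - 1)) (Or.inl hA)).mul (hasDerivAt_id u)).congr_deriv ?_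
  have hsplit : A u ^ (1 / (γ - 1)) = A u ^ (1 / (γ - 1) - 1) * A u := by
    rw [← rpow_add_one hA, sub_add_cancel]
  rw [hsplit, id_eq]
  simp only [A]
  field_simp
  ring

theorem flux_strictMonoOn (hγ : 1 < γ) : StrictMonoOn (flux γ c₀) (Icc 0 (cStar γ c₀)) := by
  refine strictMonoOn_of_deriv_pos (convex_Icc _ _) (continuous_flux hγ).continuousOn
    fun u hu ↦ ?_
  rw [interior_Icc] at hu
  have hcrit : 0 < c₀ ^ 2 - (γ + 1) / 2 * u ^ 2 := (lt_cStar_iff hγ hu.1.le).1 hu.2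
  have hA : 0 < c₀ ^ 2 - (γ - 1) / 2 * u ^ 2 := by nlinarith
  have : 0 < γ := by linarith
  rw [(hasDerivAt_flux hγ hA.ne').deriv]
  positivity

theorem flux_strictAntiOn (hγ : 1 < γ) (hc₀ : 0 < c₀) :
    StrictAntiOn (flux γ c₀) (Icc (cStar γ c₀) (uMax γ c₀)) := by
  refine strictAntiOn_of_deriv_neg (convex_Icc _ _) (continuous_flux hγ).continuousOn
    fun u hu ↦ ?_
  rw [interior_Icc] at hu
  have hu0 : 0 ≤ u := (cStar_pos hγ hc₀).le.trans hu.1.le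
  have hcrit : c₀ ^ 2 - (γ + 1) / 2 * u ^ 2 < 0 := by
    simpa using mt (le_cStar_iff hγ hu0).2 hu.1.not_ge
  have hA : 0 < c₀ ^ 2 - (γ - 1) / 2 * u ^ 2 := (lt_uMax_iff hγ hu0).1 hu.2
  have : 0 < γ := by linarith
  rw [(hasDerivAt_flux hγ hA.ne').deriv]
  exact mul_neg_of_pos_of_neg (by positivity) (div_neg_of_neg_of_pos hcrit this)

theorem dens_strictAntiOn (hγ : 1 < γ) : StrictAntiOn (dens γ c₀) (Icc 0 (uMax γ c₀)) := by
  intro u hu v hv huv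
  have hγ0 : 0 < γ := by linarith
  have hv' : 0 ≤ c₀ ^ 2 - (γ - 1) / 2 * v ^ 2 := (le_uMax_iff hγ hv.1).1 hv.2
  refine rpow_lt_rpow (div_nonneg hv' hγ0.le) (div_lt_div_of_pos_right ?_ hγ0)
    (one_div_pos.2 (by linarith))
  have hsq : u ^ 2 < v ^ 2 := pow_lt_pow_left₀ huv hu.1 two_ne_zero
  nlinarith [mul_lt_mul_of_pos_left hsq (sub_pos.2 hγ)]

theorem pres_strictAntiOn (hγ : 1 < γ) : StrictAntiOn (pres γ c₀) (Icc 0 (uMax γ c₀)) := by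
  intro u hu v hv huv
  have hv' : 0 ≤ c₀ ^ 2 - (γ - 1) / 2 * v ^ 2 := (le_uMax_iff hγ hv.1).1 hv.2
  exact rpow_lt_rpow (rpow_nonneg (div_nonneg hv' (by linarith)) _)
    (dens_strictAntiOn hγ hu hv huv) (by linarith)

theorem pres_supersonic_lt_pres_subsonic (hγ : 1 < γ) (hc₀ : 0 < c₀) {v : ℝ}
    (hu : u ∈ Ioo (cStar γ c₀) (uMax γ c₀)) (hv : v ∈ Ioo 0 (cStar γ c₀)) :
    pres γ c₀ u < pres γ c₀ v :=
  have hvu : v < u := hv.2.trans hu.1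
  pres_strictAntiOn hγ ⟨hv.1.le, (hvu.trans hu.2).le⟩
    ⟨(cStar_pos hγ hc₀).le.trans hu.1.le, hu.2.le⟩ hvu

end GasDynamics

-- Both inverses are junk outside `[0, F(c_*)]`, the common range of the two monotone branches.
noncomputable def subsonicBranch (γ c₀ : ℝ) : ℝ → ℝ :=
  invFunOn (flux γ c₀) (Icc 0 (cStar γ c₀))

noncomputable def supersonicBranch (γ c₀ : ℝ) : ℝ → ℝ :=
  invFunOn (flux γ c₀) (Icc (cStar γ c₀) (uMax γ c₀))

section Branches

variable {γ c₀ y : ℝ}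

theorem flux_cStar_pos (hγ : 1 < γ) (hc₀ : 0 < c₀) : 0 < flux γ c₀ (cStar γ c₀) :=
  flux_pos hγ ⟨cStar_pos hγ hc₀, cStar_lt_uMax hγ hc₀⟩

theorem subsonicBranch_spec (hγ : 1 < γ) (hc₀ : 0 < c₀)
    (hy : y ∈ Ioo 0 (flux γ c₀ (cStar γ c₀))) :
    subsonicBranch γ c₀ y ∈ Ioo 0 (cStar γ c₀) ∧ flux γ c₀ (subsonicBranch γ c₀ y) = y :=
  invFunOn_Icc_mem_Ioo (cStar_pos hγ hc₀).le (continuous_flux hγ).continuousOn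
    (by rwa [flux_zero, uIoo_of_lt (flux_cStar_pos hγ hc₀)])

theorem supersonicBranch_spec (hγ : 1 < γ) (hc₀ : 0 < c₀)
    (hy : y ∈ Ioo 0 (flux γ c₀ (cStar γ c₀))) :
    supersonicBranch γ c₀ y ∈ Ioo (cStar γ c₀) (uMax γ c₀) ∧
      flux γ c₀ (supersonicBranch γ c₀ y) = y :=
  invFunOn_Icc_mem_Ioo (cStar_lt_uMax hγ hc₀).le (continuous_flux hγ).continuousOn
    (by rwa [flux_uMax hγ, uIoo_of_gt (flux_cStar_pos hγ hc₀)])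

theorem continuousOn_subsonicBranch (hγ : 1 < γ) (hc₀ : 0 < c₀) :
    ContinuousOn (subsonicBranch γ c₀) (Ioo 0 (flux γ c₀ (cStar γ c₀))) :=
  (isCompact_Icc.continuousOn_invFunOn (continuous_flux hγ).continuousOn
    (flux_strictMonoOn hγ).injOn).mono fun _ hy ↦
      ⟨_, Ioo_subset_Icc_self (subsonicBranch_spec hγ hc₀ hy).1, (subsonicBranch_spec hγ hc₀ hy).2⟩

theorem continuousOn_supersonicBranch (hγ : 1 < γ) (hc₀ : 0 < c₀) :
    ContinuousOn (supersonicBranch γ c₀) (Ioo 0 (flux γ c₀ (cStar γ c₀))) :=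
  (isCompact_Icc.continuousOn_invFunOn (continuous_flux hγ).continuousOn
    (flux_strictAntiOn hγ hc₀).injOn).mono fun _ hy ↦
      ⟨_, Ioo_subset_Icc_self (supersonicBranch_spec hγ hc₀ hy).1,
        (supersonicBranch_spec hγ hc₀ hy).2⟩

theorem supersonicBranch_flux (hγ : 1 < γ) (hc₀ : 0 < c₀) {u : ℝ}
    (hu : u ∈ Icc (cStar γ c₀) (uMax γ c₀)) : supersonicBranch γ c₀ (flux γ c₀ u) = u :=
  (flux_strictAntiOn hγ hc₀).injOn.leftInvOn_invFunOn hu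

theorem flux_mul_sin_div_sin_mem_Ioo (hγ : 1 < γ) (hc₀ : 0 < c₀) {θ₀ θ₁ θ u₀ : ℝ}
    (hθ₀ : 0 < θ₀) (hθ₁ : θ₁ < π) (hu₀ : u₀ ∈ Ioo (cStar γ c₀) (uMax γ c₀))
    (hflux : flux γ c₀ u₀ * sin θ₀ < flux γ c₀ (cStar γ c₀) * sin θ₁) (hθ : θ ∈ Icc θ₀ θ₁) :
    flux γ c₀ u₀ * sin θ₀ / sin θ ∈ Ioo 0 (flux γ c₀ (cStar γ c₀)) := by
  have hsin₀ : 0 < sin θ₀ := sin_pos_of_pos_of_lt_pi hθ₀ (by linarith [hθ.1, hθ.2])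
  have hsin : 0 < sin θ := sin_pos_of_pos_of_lt_pi (by linarith [hθ.1]) (by linarith [hθ.2])
  have hF₀ : 0 < flux γ c₀ u₀ := flux_pos hγ ⟨(cStar_pos hγ hc₀).trans hu₀.1, hu₀.2⟩
  have hFc := flux_cStar_pos hγ hc₀
  have hF : flux γ c₀ u₀ < flux γ c₀ (cStar γ c₀) :=
    flux_strictAntiOn hγ hc₀ ⟨le_rfl, (cStar_lt_uMax hγ hc₀).le⟩ (Ioo_subset_Icc_self hu₀) hu₀.1
  have hmin : min (sin θ₀) (sin θ₁) ≤ sin θ :=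
    strictConcaveOn_sin_Icc.concaveOn.min_le_of_mem_Icc
      ⟨hθ₀.le, by linarith [hθ.1, hθ.2]⟩ ⟨by linarith [hθ.1, hθ.2], hθ₁.le⟩ hθ
  refine ⟨by positivity, (div_lt_iff₀ hsin).2 ?_⟩
  calc flux γ c₀ u₀ * sin θ₀
      < flux γ c₀ (cStar γ c₀) * min (sin θ₀) (sin θ₁) := by
        rw [mul_min_of_nonneg _ _ hFc.le]
        exact lt_min (mul_lt_mul_of_pos_right hF hsin₀) hflux
    _ ≤ flux γ c₀ (cStar γ c₀) * sin θ := by gcongr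

end Branches

/-- existence and non-uniqueness of background transonic shock solutions on
the sphere: for every shock position `θ_b ∈ [θ₀, θ₁]` there is a background transonic shock
solution with shock at `θ_b`, satisfying the Rankine–Hugoniot and entropy conditions. -/
theorem background_solution_exists_any_shock_position (γ c₀ θ₀ θ₁ u₀ : ℝ)
    (hγ : 1 < γ) (hc₀ : 0 < c₀)
    (hθ₀ : θ₀ ∈ Set.Ioo 0 (π / 2)) (hθ₁ : θ₁ ∈ Set.Ioo (π / 2) π)
    (hu₀ : u₀ ∈ Set.Ioo (cStar γ c₀) (uMax γ c₀))
    (hflux : flux γ c₀ u₀ * Real.sin θ₀ < flux γ c₀ (cStar γ c₀) * Real.sin θ₁) :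
    ∀ θb ∈ Set.Icc θ₀ θ₁,
      ∃ um up : ℝ → ℝ,
        ContinuousOn um (Set.Icc θ₀ θb) ∧
        ContinuousOn up (Set.Icc θb θ₁) ∧
        (∀ θ ∈ Set.Icc θ₀ θb, um θ ∈ Set.Ioo (cStar γ c₀) (uMax γ c₀)) ∧
        (∀ θ ∈ Set.Icc θb θ₁, up θ ∈ Set.Ioo 0 (cStar γ c₀)) ∧
        um θ₀ = u₀ ∧
        (∀ θ ∈ Set.Icc θ₀ θb,
          flux γ c₀ (um θ) * Real.sin θ = flux γ c₀ u₀ * Real.sin θ₀) ∧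
        (∀ θ ∈ Set.Icc θb θ₁,
          flux γ c₀ (up θ) * Real.sin θ = flux γ c₀ u₀ * Real.sin θ₀) ∧
        dens γ c₀ (um θb) * um θb = dens γ c₀ (up θb) * up θb ∧
        pres γ c₀ (um θb) < pres γ c₀ (up θb) := by
  intro θb hθb
  set m := flux γ c₀ u₀ * sin θ₀
  have hsub₀ : Icc θ₀ θb ⊆ Icc θ₀ θ₁ := Icc_subset_Icc_right hθb.2
  have hsub₁ : Icc θb θ₁ ⊆ Icc θ₀ θ₁ := Icc_subset_Icc_left hθb.1
  have hmem {θ} (hθ : θ ∈ Icc θ₀ θ₁) : m / sin θ ∈ Ioo 0 (flux γ c₀ (cStar γ c₀)) :=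
    flux_mul_sin_div_sin_mem_Ioo hγ hc₀ hθ₀.1 hθ₁.2 hu₀ hflux hθ
  have hsin {θ} (hθ : θ ∈ Icc θ₀ θ₁) : sin θ ≠ 0 :=
    (sin_pos_of_pos_of_lt_pi (hθ₀.1.trans_le hθ.1) (hθ.2.trans_lt hθ₁.2)).ne'
  have hcont {s} (hs : s ⊆ Icc θ₀ θ₁) : ContinuousOn (fun θ ↦ m / sin θ) s :=
    continuousOn_const.div continuousOn_sin fun _ hθ ↦ hsin (hs hθ)
  have hsuper {θ} (hθ : θ ∈ Icc θ₀ θ₁) := supersonicBranch_spec hγ hc₀ (hmem hθ)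
  have hsubs {θ} (hθ : θ ∈ Icc θ₀ θ₁) := subsonicBranch_spec hγ hc₀ (hmem hθ)
  refine ⟨fun θ ↦ supersonicBranch γ c₀ (m / sin θ), fun θ ↦ subsonicBranch γ c₀ (m / sin θ),
    (continuousOn_supersonicBranch hγ hc₀).comp (hcont hsub₀) fun _ hθ ↦ hmem (hsub₀ hθ),
    (continuousOn_subsonicBranch hγ hc₀).comp (hcont hsub₁) fun _ hθ ↦ hmem (hsub₁ hθ),
    fun _ hθ ↦ (hsuper (hsub₀ hθ)).1, fun _ hθ ↦ (hsubs (hsub₁ hθ)).1, ?_,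
    fun _ hθ ↦ by rw [(hsuper (hsub₀ hθ)).2, div_mul_cancel₀ _ (hsin (hsub₀ hθ))],
    fun _ hθ ↦ by rw [(hsubs (hsub₁ hθ)).2, div_mul_cancel₀ _ (hsin (hsub₁ hθ))],
    (hsuper hθb).2.trans (hsubs hθb).2.symm, ?_⟩
  · have hθ₀' : θ₀ ∈ Icc θ₀ θ₁ := ⟨le_rfl, hθb.1.trans hθb.2⟩
    simp only [m, mul_div_cancel_right₀ _ (hsin hθ₀')]
    exact supersonicBranch_flux hγ hc₀ (Ioo_subset_Icc_self hu₀)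
  · exact pres_supersonic_lt_pres_subsonic hγ hc₀ (hsuper hθb).1 (hsubs hθb).1
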